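/- For all α, β, γ ∈ ℝ, define the polynomials a = X⁴ + αX² + 1, b = X² + β, c = γ(1 − αβ + β²)·X + ½γ(α − 2β)·X·(X² + β), together with ȧ = (4 − α²)X², ḃ = 1 − αβ + β² (a constant polynomial), and the scalar γ̇ = ½(α − 2β)γ. Then the polynomial identity 2a·(γ̇·b + γ·ḃ) − ȧ·γ·b = 2a·c' − a'·c holds, where primes denote differentiation of polynomials. -/
import Mathlib


open Polynomial

/-- The Whitham identity `2a·(γ̇·b + γ·ḃ) − ȧ·γ·b = 2a·c' − a'·c` on the family
of elliptic curves `ν² = κ⁴ + ακ² + 1`. -/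
theorem stmt_10 (α β γ dγ : ℝ) (a b c da db : ℝ[X])
    (ha : a = X ^ 4 + C α * X ^ 2 + 1)
    (hb : b = X ^ 2 + C β)
    (hc : c = C (γ * (1 - α * β + β ^ 2)) * X
        + C (1/2 * γ * (α - 2 * β)) * X * (X ^ 2 + C β))
    (hda : da = C (4 - α ^ 2) * X ^ 2)
    (hdb : db = C (1 - α * β + β ^ 2))
    (hdγ : dγ = 1/2 * (α - 2 * β) * γ) :
    2 * a * (C dγ * b + C γ * db) - da * (C γ * b)
      = 2 * a * derivative c - derivative a * c := by
  subst ha hb hc hda hdb hdγ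
  apply Polynomial.funext
  intro x
  simp only [derivative_add, derivative_mul, derivative_C, derivative_X, derivative_X_pow,
    derivative_one, derivative_pow, derivative_ofNat, eval_add, eval_mul, eval_sub, eval_pow,
    eval_C, eval_X, eval_one, eval_zero, eval_ofNat, eval_natCast, Nat.cast_ofNat]
  ring
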